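/- For every real number c ≥ 1 there exists a bounded invertible operator W with bounded inverse on the product Hilbert space K := H × H such that: (i) W preserves the indefinite inner product, i.e. {W u, W v} = {u, v} for all u, v ∈ K (W is J-unitary); (ii) r(W) = r(W⁻¹) = c; and (iii) S(W,c) = S(W⁻¹,c) = S((W*)⁻¹,c) = S(W*,c) = {0}. -/

import Mathlib

noncomputable section

/-- `Hsp` is the complex Hilbert space `ℓ²(ℤ)` of square-summable bilateral
complex sequences. -/
abbrev Hsp : Type := lp (fun _ : ℤ => ℂ) 2

/-- `K` is the product Hilbert space `H × H`. -/
abbrev K : Type := WithLp 2 (Hsp × Hsp)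

/-- The indefinite inner product `{(x,y),(x',y')} := ⟨x,y'⟩ + ⟨y,x'⟩` on `K = H × H`. -/
def indef (p q : K) : ℂ :=
  (inner ℂ (WithLp.equiv 2 (Hsp × Hsp) p).1 (WithLp.equiv 2 (Hsp × Hsp) q).2 : ℂ) +
  (inner ℂ (WithLp.equiv 2 (Hsp × Hsp) p).2 (WithLp.equiv 2 (Hsp × Hsp) q).1 : ℂ)

/-- `S T a` is the set of vectors `x` such that `‖T^N x‖ ≤ M·a^N` for all `N ≥ 0`,
for some constant `M ≥ 0`. -/
def S {X : Type*} [NormedAddCommGroup X] [NormedSpace ℂ X] (T : X →L[ℂ] X) (a : ℝ) : Set X :=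
  {x | ∃ M : ℝ, 0 ≤ M ∧ ∀ N : ℕ, ‖(T ^ N) x‖ ≤ M * a ^ N}

/-!
Write `c = exp ρ`. For an even `φ : ℤ → ℝ` with bounded increments let `G_d` be the weighted
shift `(G_d x) n = exp (φ n - φ (n + d)) x (n + d)` and `H_d` the same shift for `-φ`, and take
`W = G₋₁ ⊕ H₋₁`, `W⁻¹ = G₁ ⊕ H₁`. The weights of `G_d` and `H_d` are reciprocal, so `W` preserves
the indefinite form, and `W*`, `(W⁻¹)*` are shifts of the same kind for `-φ`.

Since `G_d ^ N = G_{N d}`, the norms of the powers are governed by `|φ (n + N) - φ n|`. We take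
for `φ` the even walk whose increments are `±(ρ + 1/(j+1))` on consecutive blocks `j` of rapidly
growing length. Its increments are eventually at most `ρ + ε`, whence `‖W ^ N‖ ≤ C (c + ε) ^ N` and
`r(W) ≤ c`. On the other hand `φ (n + N) - φ n - N ρ` is unbounded above and below in `N`, so at a
nonzero coordinate of any `x ≠ 0` the orbit of each of the four operators beats every `M c ^ N`
infinitely often: this gives `S = {0}`, and, through Gelfand's formula, `r(W) ≥ c`.
-/

open Filter Topology
open scoped NNReal ENNReal

section Growth

variable {X Y : Type*} [NormedAddCommGroup X] [NormedSpace ℂ X]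
  [NormedAddCommGroup Y] [NormedSpace ℂ Y]

/-- Infinitely often rather than once, so that it also bounds the spectral radius from below. -/
def FrequentlyOutgrows (T : X →L[ℂ] X) (a : ℝ) (x : X) : Prop :=
  ∀ M : ℝ, ∃ᶠ N in atTop, M * a ^ N < ‖(T ^ N) x‖

lemma FrequentlyOutgrows.of_norm_le {T : X →L[ℂ] X} {T' : Y →L[ℂ] Y} {a : ℝ} {x : X} {y : Y}
    (h : FrequentlyOutgrows T a x) (hle : ∀ N, ‖(T ^ N) x‖ ≤ ‖(T' ^ N) y‖) :
    FrequentlyOutgrows T' a y :=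
  fun M => (h M).mono fun N hN => hN.trans_le (hle N)

lemma S_eq_zero_of_frequentlyOutgrows {T : X →L[ℂ] X} {a : ℝ}
    (h : ∀ x ≠ 0, FrequentlyOutgrows T a x) : S T a = {0} := by
  refine Set.eq_singleton_iff_unique_mem.2 ⟨⟨0, le_rfl, fun N => by simp⟩, ?_⟩
  rintro x ⟨M, -, hM⟩
  by_contra hx
  obtain ⟨N, hN⟩ := (h x hx M).exists
  exact (hM N).not_gt hN

lemma ofReal_le_spectralRadius_of_frequentlyOutgrows [CompleteSpace X] {T : X →L[ℂ] X}
    {a : ℝ} {x : X} (ha : 0 ≤ a) (hx : FrequentlyOutgrows T a x) :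
    ENNReal.ofReal a ≤ spectralRadius ℂ T := by
  refine ge_of_tendsto_of_frequently
    (spectrum.pow_norm_pow_one_div_tendsto_nhds_spectralRadius T) ?_
  refine ((hx ‖x‖).and_eventually (eventually_ge_atTop 1)).mono fun N ⟨hN, hN1⟩ => ?_
  have hpow : a ^ N ≤ ‖T ^ N‖ := by
    have := hN.trans_le ((T ^ N).le_opNorm x)
    rw [mul_comm ‖T ^ N‖] at this
    exact (lt_of_mul_lt_mul_left this (norm_nonneg x)).le
  apply ENNReal.ofReal_le_ofReal
  calc a = (a ^ N) ^ (1 / N : ℝ) := by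
        rw [one_div, Real.pow_rpow_inv_natCast ha (by omega)]
    _ ≤ ‖T ^ N‖ ^ (1 / N : ℝ) := by gcongr

lemma spectralRadius_le_ofReal_of_norm_pow_le [CompleteSpace X] {T : X →L[ℂ] X} {a : ℝ}
    (ha : 0 ≤ a) (h : ∀ b > a, ∃ C, ∀ N, ‖T ^ N‖ ≤ C * b ^ N) :
    spectralRadius ℂ T ≤ ENNReal.ofReal a := by
  refine ENNReal.le_of_forall_pos_le_add fun ε hε _ => ?_
  obtain ⟨C, hC⟩ := h (a + ε) (by simpa using hε)
  set C' := max C 1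
  have hb : 0 ≤ a + ε := by positivity
  have hlim : Tendsto (fun N : ℕ => ENNReal.ofReal (C' ^ (1 / N : ℝ) * (a + ε))) atTop
      (𝓝 (ENNReal.ofReal (a + ε))) := by
    refine ENNReal.tendsto_ofReal ?_
    have := ((tendsto_const_nhds (x := C')).rpow (tendsto_const_div_atTop_nhds_zero_nat 1)
      (Or.inl (by positivity))).mul_const (a + ε)
    simpa using this
  rw [← ENNReal.ofReal_coe_nnreal]
  refine (le_of_tendsto_of_tendsto
    (spectrum.pow_norm_pow_one_div_tendsto_nhds_spectralRadius T) hlim ?_).trans_eq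
    (ENNReal.ofReal_add ha ε.2)
  filter_upwards [eventually_ge_atTop 1] with N hN
  apply ENNReal.ofReal_le_ofReal
  calc ‖T ^ N‖ ^ (1 / N : ℝ) ≤ (C' * (a + ε) ^ N) ^ (1 / N : ℝ) := by
        gcongr
        exact (hC N).trans (by gcongr; exact le_max_left _ _)
    _ = C' ^ (1 / N : ℝ) * (a + ε) := by
        rw [Real.mul_rpow (by positivity) (by positivity), one_div,
          Real.pow_rpow_inv_natCast hb (by omega)]

end Growth

section IntegerIncrements

open Finset

lemma abs_sub_le_of_abs_succ_sub_le {φ : ℤ → ℝ} {L μ : ℝ} {s : Finset ℤ} (hμ : 0 ≤ μ)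
    (hL : ∀ k, |φ (k + 1) - φ k| ≤ L) (hs : ∀ k ∉ s, |φ (k + 1) - φ k| ≤ μ) (m n : ℤ) :
    |φ m - φ n| ≤ μ * |(m : ℝ) - n| + L * #s := by
  wlog hnm : n ≤ m generalizing m n
  · simpa only [abs_sub_comm] using this n m (by omega)
  obtain ⟨N, rfl⟩ := Int.le.dest hnm
  have hL0 : 0 ≤ L := (abs_nonneg _).trans (hL 0)
  have hstep : ∀ i ∈ range N, |φ (n + i + 1) - φ (n + i)| ≤ μ + if n + i ∈ s then L else 0 := by
    intro i _
    split_ifs with hi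
    · linarith [hL (n + i)]
    · simpa using hs _ hi
  have hcard : #((range N).filter fun i : ℕ => n + (i : ℤ) ∈ s) ≤ #s :=
    card_le_card_of_injOn (fun i : ℕ => n + (i : ℤ)) (fun i hi => (mem_filter.1 hi).2)
      (fun i _ j _ hij => by simpa using hij)
  calc |φ (n + N) - φ n|
      = |∑ i ∈ range N, (φ (n + i + 1) - φ (n + i))| := by
        have := sum_range_sub (fun i : ℕ => φ (n + i)) N
        push_cast [← add_assoc] at this
        rw [this, add_zero]
    _ ≤ ∑ i ∈ range N, |φ (n + i + 1) - φ (n + i)| := abs_sum_le_sum_abs _ _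
    _ ≤ ∑ i ∈ range N, (μ + if n + (i : ℤ) ∈ s then L else 0) := sum_le_sum hstep
    _ = μ * N + L * #((range N).filter fun i : ℕ => n + (i : ℤ) ∈ s) := by
        rw [sum_add_distrib, ← sum_filter]; simp [mul_comm]
    _ ≤ μ * |((n + N : ℤ) : ℝ) - n| + L * #s := by
        gcongr
        simp

lemma lipschitzWith_of_abs_succ_sub_le {φ : ℤ → ℝ} {L : ℝ≥0}
    (hL : ∀ k, |φ (k + 1) - φ k| ≤ L) : LipschitzWith L φ :=
  LipschitzWith.of_dist_le_mul fun m n => by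
    simpa [Real.dist_eq, Int.dist_eq] using
      abs_sub_le_of_abs_succ_sub_le (s := ∅) L.2 hL (by simpa using hL) m n

end IntegerIncrements

/-- The sign `(-1) ^ e` selects upward (`e` even) or downward (`e` odd) excursions. -/
def Oscillates (φ : ℤ → ℝ) (ρ : ℝ) : Prop :=
  ∀ e : ℕ, ∀ n : ℤ, ∀ R : ℝ, ∃ᶠ N : ℕ in atTop, R + N * ρ < (-1) ^ e * (φ (n + N) - φ n)

lemma Function.Even.neg {α β : Type*} [Neg α] [Neg β] {f : α → β} (hf : f.Even) : (-f).Even :=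
  fun a => congrArg Neg.neg (hf a)

lemma Oscillates.neg {φ : ℤ → ℝ} {ρ : ℝ} (h : Oscillates φ ρ) : Oscillates (-φ) ρ :=
  fun e n R => (h (e + 1) n R).mono fun N hN => by
    convert hN using 1
    simp only [Pi.neg_apply, pow_succ]
    ring

namespace Oscillating

open Finset

/-- Block `j` is `[blockEnd ρ j, blockEnd ρ (j + 1))`, where `slope ρ` is `±(ρ + 1/(j+1))`. Its
length `(j + 1) (A b + j + 1)`, with `b = blockEnd ρ j` and `A = ⌈2ρ⌉₊ + 1 ≥ 2ρ + 1`, lets the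
excess `1/(j+1)` over slope `ρ` gain more than the `(2ρ + 1) b` that `±psi ρ t - ρ t` may have
lost on the earlier blocks. -/
def blockEnd (ρ : ℝ) : ℕ → ℕ
  | 0 => 0
  | j + 1 => blockEnd ρ j + (j + 1) * ((⌈2 * ρ⌉₊ + 1) * blockEnd ρ j + j + 1)

variable {ρ : ℝ}

lemma blockEnd_succ (j : ℕ) :
    blockEnd ρ (j + 1) = blockEnd ρ j + (j + 1) * ((⌈2 * ρ⌉₊ + 1) * blockEnd ρ j + j + 1) :=
  rfl

lemma blockEnd_add_le_blockEnd_succ (j : ℕ) : blockEnd ρ j + (j + 1) ≤ blockEnd ρ (j + 1) := by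
  rw [blockEnd_succ]
  have : j + 1 ≤ (j + 1) * ((⌈2 * ρ⌉₊ + 1) * blockEnd ρ j + j + 1) :=
    Nat.le_mul_of_pos_right _ (by omega)
  omega

lemma blockEnd_strictMono : StrictMono (blockEnd ρ) :=
  strictMono_nat_of_lt_succ fun j => by have := blockEnd_add_le_blockEnd_succ (ρ := ρ) j; omega

lemma lt_blockEnd_succ (j : ℕ) : j < blockEnd ρ (j + 1) := by
  have := (blockEnd_strictMono (ρ := ρ)).id_le j
  have := blockEnd_add_le_blockEnd_succ (ρ := ρ) j
  omega

lemma exists_lt_blockEnd_succ (ρ : ℝ) (m : ℕ) : ∃ j, m < blockEnd ρ (j + 1) :=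
  ⟨m, lt_blockEnd_succ m⟩

def blockIndex (ρ : ℝ) (m : ℕ) : ℕ := Nat.find (exists_lt_blockEnd_succ ρ m)

lemma le_blockIndex {j m : ℕ} (h : blockEnd ρ j ≤ m) : j ≤ blockIndex ρ m := by
  by_contra! hlt
  have hmono := blockEnd_strictMono.monotone (f := blockEnd ρ)
    (show blockIndex ρ m + 1 ≤ j by omega)
  exact (Nat.find_spec (exists_lt_blockEnd_succ ρ m)).not_ge (hmono.trans h)

lemma blockIndex_eq {j m : ℕ} (h₁ : blockEnd ρ j ≤ m) (h₂ : m < blockEnd ρ (j + 1)) :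
    blockIndex ρ m = j :=
  le_antisymm (Nat.find_min' _ h₂) (le_blockIndex h₁)

def slope (ρ : ℝ) (m : ℕ) : ℝ := (-1) ^ blockIndex ρ m * (ρ + 1 / (blockIndex ρ m + 1))

def psi (ρ : ℝ) (t : ℕ) : ℝ := ∑ m ∈ range t, slope ρ m

def phi (ρ : ℝ) (n : ℤ) : ℝ := psi ρ n.natAbs

lemma abs_slope_le {j m : ℕ} (h : blockEnd ρ j ≤ m) : |slope ρ m| ≤ |ρ| + 1 / (j + 1) := by
  have hj : (j : ℝ) ≤ blockIndex ρ m := by exact_mod_cast le_blockIndex h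
  rw [slope, abs_mul, abs_pow, abs_neg, abs_one, one_pow, one_mul]
  calc |ρ + 1 / (blockIndex ρ m + 1)| ≤ |ρ| + 1 / (blockIndex ρ m + 1) := by
        refine (abs_add_le _ _).trans_eq ?_
        rw [abs_of_pos (show (0 : ℝ) < 1 / (blockIndex ρ m + 1) by positivity)]
    _ ≤ |ρ| + 1 / (j + 1) := by gcongr

lemma abs_slope_le_abs_add_one (m : ℕ) : |slope ρ m| ≤ |ρ| + 1 := by
  simpa using abs_slope_le (j := 0) (Nat.zero_le m)

lemma abs_psi_le (t : ℕ) : |psi ρ t| ≤ (|ρ| + 1) * t :=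
  calc |psi ρ t| ≤ ∑ m ∈ range t, |slope ρ m| := abs_sum_le_sum_abs _ _
    _ ≤ ∑ _m ∈ range t, (|ρ| + 1) := sum_le_sum fun m _ => abs_slope_le_abs_add_one m
    _ = (|ρ| + 1) * t := by rw [sum_const, card_range, nsmul_eq_mul, mul_comm]

lemma psi_blockEnd_succ (j : ℕ) :
    psi ρ (blockEnd ρ (j + 1)) = psi ρ (blockEnd ρ j) + (-1) ^ j * (ρ + 1 / (j + 1)) *
      ((j + 1) * ((⌈2 * ρ⌉₊ + 1) * blockEnd ρ j + j + 1) : ℕ) := by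
  have hle := blockEnd_strictMono.monotone (f := blockEnd ρ) (Nat.le_succ j)
  have hblock : ∀ m ∈ Ico (blockEnd ρ j) (blockEnd ρ (j + 1)),
      slope ρ m = (-1) ^ j * (ρ + 1 / (j + 1)) := fun m hm => by
    rw [slope, blockIndex_eq (mem_Ico.1 hm).1 (mem_Ico.1 hm).2]
  rw [psi, psi, ← sum_range_add_sum_Ico _ hle, sum_congr rfl hblock, sum_const, Nat.card_Ico,
    blockEnd_succ, Nat.add_sub_cancel_left, nsmul_eq_mul, mul_comm (_ : ℝ)]

lemma le_neg_one_pow_mul_psi_blockEnd (hρ : 0 ≤ ρ) (j : ℕ) :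
    ρ * blockEnd ρ (j + 1) + j ≤ (-1) ^ j * psi ρ (blockEnd ρ (j + 1)) := by
  have hprev : -((ρ + 1) * blockEnd ρ j) ≤ (-1) ^ j * psi ρ (blockEnd ρ j) := by
    have h := neg_abs_le ((-1) ^ j * psi ρ (blockEnd ρ j))
    rw [abs_mul, abs_pow, abs_neg, abs_one, one_pow, one_mul] at h
    linarith [abs_of_nonneg hρ ▸ abs_psi_le (ρ := ρ) (blockEnd ρ j)]
  have hsq : ((-1 : ℝ) ^ j) * (-1) ^ j = 1 := by rw [← mul_pow]; norm_num
  have hA : 2 * ρ ≤ ⌈2 * ρ⌉₊ := Nat.le_ceil _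
  have hb : (0 : ℝ) ≤ blockEnd ρ j := Nat.cast_nonneg _
  rw [psi_blockEnd_succ, mul_add, ← mul_assoc, ← mul_assoc, hsq, one_mul, blockEnd_succ]
  push_cast
  generalize (⌈2 * ρ⌉₊ : ℝ) = A at hA ⊢
  generalize (blockEnd ρ j : ℝ) = b at hb hprev ⊢
  have hlen : (ρ + 1 / (j + 1)) * ((j + 1) * ((A + 1) * b + j + 1))
      = ρ * ((j + 1) * ((A + 1) * b + j + 1)) + ((A + 1) * b + j + 1) := by
    field_simp
  rw [hlen]
  nlinarith

lemma exists_lt_neg_one_pow_mul_psi (hρ : 0 ≤ ρ) (e : ℕ) (R : ℝ) (T : ℕ) :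
    ∃ t ≥ T, R + ρ * t < (-1) ^ e * psi ρ t := by
  set j := 2 * (⌈R⌉₊ + T + 1) + e
  refine ⟨blockEnd ρ (j + 1), by have := lt_blockEnd_succ (ρ := ρ) j; omega, ?_⟩
  have hpar : ((-1 : ℝ) ^ j) = (-1) ^ e := by
    rw [pow_add, pow_mul]; norm_num
  have hRj : R < j := by
    have : ((⌈R⌉₊ + 1 : ℕ) : ℝ) ≤ j := by exact_mod_cast (by omega : ⌈R⌉₊ + 1 ≤ j)
    push_cast at this
    linarith [Nat.le_ceil R]
  have := le_neg_one_pow_mul_psi_blockEnd hρ j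
  rw [hpar] at this
  linarith

lemma even_phi : (phi ρ).Even := fun n => by simp [phi]

lemma exists_abs_phi_succ_sub_eq (k : ℤ) :
    ∃ m : ℕ, k ≤ m ∧ -k - 1 ≤ m ∧ |phi ρ (k + 1) - phi ρ k| = |slope ρ m| := by
  rcases le_or_gt 0 k with hk | hk
  · refine ⟨k.toNat, by omega, by omega, ?_⟩
    rw [phi, phi, show (k + 1).natAbs = k.toNat + 1 by omega, show k.natAbs = k.toNat by omega,
      psi, psi, sum_range_succ, add_sub_cancel_left]
  · refine ⟨(-k - 1).toNat, by omega, by omega, ?_⟩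
    rw [phi, phi, show (k + 1).natAbs = (-k - 1).toNat by omega,
      show k.natAbs = (-k - 1).toNat + 1 by omega, psi, psi, sum_range_succ, sub_add_cancel_left,
      abs_neg]

lemma abs_phi_succ_sub_le (k : ℤ) : |phi ρ (k + 1) - phi ρ k| ≤ |ρ| + 1 := by
  obtain ⟨m, -, -, hm⟩ := exists_abs_phi_succ_sub_eq (ρ := ρ) k
  exact hm ▸ abs_slope_le_abs_add_one m

lemma lipschitzWith_phi (ρ : ℝ) : LipschitzWith (‖ρ‖₊ + 1) (phi ρ) :=
  lipschitzWith_of_abs_succ_sub_le fun k => by simpa using abs_phi_succ_sub_le k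

/-- Outside `[-blockEnd ρ j, blockEnd ρ j)` the increments of `phi ρ` are at most `ρ + 1/(j+1)`. -/
lemma exists_abs_phi_sub_le (hρ : 0 ≤ ρ) {μ : ℝ} (hμ : ρ < μ) :
    ∃ C, ∀ m n : ℤ, |phi ρ m - phi ρ n| ≤ μ * |(m : ℝ) - n| + C := by
  obtain ⟨j, hj⟩ := exists_nat_one_div_lt (sub_pos.2 hμ)
  refine ⟨_, abs_sub_le_of_abs_succ_sub_le (s := Ico (-(blockEnd ρ j : ℤ)) (blockEnd ρ j))
    (by linarith) abs_phi_succ_sub_le fun k hk => ?_⟩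
  obtain ⟨m, h₁, h₂, hm⟩ := exists_abs_phi_succ_sub_eq (ρ := ρ) k
  rw [mem_Ico] at hk
  rw [hm]
  refine (abs_slope_le (j := j) (by omega)).trans ?_
  rw [abs_of_nonneg hρ]
  linarith

lemma oscillates_phi (hρ : 0 ≤ ρ) : Oscillates (phi ρ) ρ := by
  intro e n R
  rw [frequently_atTop]
  intro N₀
  obtain ⟨t, ht, hlt⟩ := exists_lt_neg_one_pow_mul_psi hρ e
    (R - ρ * n + (-1) ^ e * phi ρ n) (N₀ + n.natAbs)
  refine ⟨(t - n).toNat, by omega, ?_⟩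
  have hN : n + ((t - n).toNat : ℕ) = (t : ℤ) := by omega
  have hNr : (((t - n).toNat : ℕ) : ℝ) = t - n := by
    rw [← Int.cast_natCast, Int.toNat_of_nonneg (by omega)]; push_cast; ring
  rw [hN, hNr, show phi ρ t = psi ρ t by simp [phi], mul_sub]
  linarith

end Oscillating

section WeightedShift

variable {α E : Type*} [NormedAddCommGroup E]

lemma Memℓp.comp_equiv {p : ℝ≥0∞} {f : α → E} (hf : Memℓp f p) (hp : 0 < p.toReal)
    (e : α ≃ α) : Memℓp (f ∘ e) p := by
  rw [memℓp_gen_iff hp] at hf ⊢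
  exact e.summable_iff.2 hf

def lpCompEquiv (e : α ≃ α) (x : lp (fun _ : α => E) 2) : lp (fun _ : α => E) 2 :=
  ⟨x ∘ e, (lp.memℓp x).comp_equiv (by norm_num) e⟩

lemma lpCompEquiv_apply (e : α ≃ α) (x : lp (fun _ : α => E) 2) (i : α) :
    lpCompEquiv e x i = x (e i) := rfl

lemma norm_lpCompEquiv (e : α ≃ α) (x : lp (fun _ : α => E) 2) : ‖lpCompEquiv e x‖ = ‖x‖ := by
  have hp : 0 < (2 : ℝ≥0∞).toReal := by norm_num
  rw [← Real.rpow_left_inj (norm_nonneg _) (norm_nonneg _) hp.ne', lp.norm_rpow_eq_tsum hp,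
    lp.norm_rpow_eq_tsum hp]
  exact e.tsum_eq (fun i => ‖x i‖ ^ (2 : ℝ≥0∞).toReal)

variable {φ ψ : ℤ → ℝ} {L : ℝ≥0}

def expShiftSeq (φ : ℤ → ℝ) (d : ℤ) (x : ℤ → ℂ) (n : ℤ) : ℂ :=
  (Real.exp (φ n - φ (n + d)) : ℂ) * x (n + d)

lemma norm_expShiftSeq_le {d : ℤ} {B : ℝ} (hB : ∀ n, φ n - φ (n + d) ≤ B) (x : Hsp) (n : ℤ) :
    ‖expShiftSeq φ d x n‖ ≤ ‖((Real.exp B : ℂ) • lpCompEquiv (Equiv.addRight d) x) n‖ := by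
  rw [expShiftSeq, lp.coeFn_smul, Pi.smul_apply, lpCompEquiv_apply, norm_mul, norm_smul,
    Complex.norm_real, Complex.norm_real, Real.norm_of_nonneg (Real.exp_pos _).le,
    Real.norm_of_nonneg (Real.exp_pos _).le]
  exact mul_le_mul_of_nonneg_right (Real.exp_le_exp.2 (hB n)) (norm_nonneg _)

lemma memℓp_expShiftSeq {d : ℤ} {B : ℝ} (hB : ∀ n, φ n - φ (n + d) ≤ B) (x : Hsp) :
    Memℓp (expShiftSeq φ d x) 2 :=
  (lp.memℓp _).mono' (norm_expShiftSeq_le hB x)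

lemma sub_le_of_lipschitzWith (hφ : LipschitzWith L φ) (d n : ℤ) :
    φ n - φ (n + d) ≤ L * |(d : ℝ)| := by
  have h := hφ.dist_le_mul n (n + d)
  rw [Real.dist_eq, Int.dist_eq] at h
  push_cast at h
  rw [show (n : ℝ) - (n + d) = -d by ring, abs_neg] at h
  exact (le_abs_self _).trans h

lemma norm_expShiftSeq_lp_le {d : ℤ} {B : ℝ} (hB : ∀ n, φ n - φ (n + d) ≤ B) (x : Hsp) :
    ‖(⟨expShiftSeq φ d x, memℓp_expShiftSeq hB x⟩ : Hsp)‖ ≤ Real.exp B * ‖x‖ := by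
  refine (lp.norm_mono (by norm_num) (norm_expShiftSeq_le hB x)).trans_eq ?_
  rw [norm_smul, Complex.norm_real, Real.norm_of_nonneg (Real.exp_pos _).le, norm_lpCompEquiv]

def expShift (φ : ℤ → ℝ) (hφ : LipschitzWith L φ) (d : ℤ) : Hsp →L[ℂ] Hsp :=
  LinearMap.mkContinuous
    { toFun := fun x => ⟨expShiftSeq φ d x, memℓp_expShiftSeq (sub_le_of_lipschitzWith hφ d) x⟩
      map_add' := fun x y => lp.ext <| funext fun n => by
        simp only [expShiftSeq, lp.coeFn_add, Pi.add_apply, mul_add]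
      map_smul' := fun a x => lp.ext <| funext fun n => by
        simp only [expShiftSeq, lp.coeFn_smul, Pi.smul_apply, smul_eq_mul, RingHom.id_apply]
        rw [mul_left_comm] }
    (Real.exp (L * |(d : ℝ)|)) (norm_expShiftSeq_lp_le (sub_le_of_lipschitzWith hφ d))

variable (hφ : LipschitzWith L φ)

lemma expShift_apply (d : ℤ) (x : Hsp) (n : ℤ) :
    expShift φ hφ d x n = Real.exp (φ n - φ (n + d)) * x (n + d) := rfl

lemma expShift_comp (d e : ℤ) : expShift φ hφ d ∘L expShift φ hφ e = expShift φ hφ (d + e) := by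
  ext x n
  simp only [ContinuousLinearMap.comp_apply, expShift_apply, ← mul_assoc, ← Complex.ofReal_mul,
    ← Real.exp_add, add_assoc]
  ring_nf

lemma expShift_zero : expShift φ hφ 0 = 1 := by
  ext x n
  simp [expShift_apply]

lemma expShift_pow (d : ℤ) (N : ℕ) : expShift φ hφ d ^ N = expShift φ hφ (N * d) := by
  induction N with
  | zero => simp [expShift_zero]
  | succ N ih =>
    rw [pow_succ, ih, ContinuousLinearMap.mul_def, expShift_comp]
    push_cast; ring_nf

lemma norm_expShift_le {d : ℤ} {B : ℝ} (hB : ∀ n, φ n - φ (n + d) ≤ B) :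
    ‖expShift φ hφ d‖ ≤ Real.exp B :=
  ContinuousLinearMap.opNorm_le_bound _ (Real.exp_pos _).le (norm_expShiftSeq_lp_le hB)

lemma exp_mul_norm_le_norm_expShift (d : ℤ) (x : Hsp) (n : ℤ) :
    Real.exp (φ n - φ (n + d)) * ‖x (n + d)‖ ≤ ‖expShift φ hφ d x‖ := by
  have h := lp.norm_apply_le_norm (by norm_num) (expShift φ hφ d x) n
  rwa [expShift_apply, norm_mul, Complex.norm_real, Real.norm_of_nonneg (Real.exp_pos _).le] at h

/-- The weights of `expShift φ d` and `expShift (-φ) d` are reciprocal. -/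
lemma inner_expShift_expShift (hψ : LipschitzWith L ψ) (hψφ : ψ = -φ) (d : ℤ) (x y : Hsp) :
    inner ℂ (expShift φ hφ d x) (expShift ψ hψ d y) = inner ℂ x y := by
  subst hψφ
  rw [lp.inner_eq_tsum, lp.inner_eq_tsum,
    ← (Equiv.addRight d).tsum_eq (fun n => inner ℂ (x n) (y n))]
  refine tsum_congr fun n => ?_
  simp only [expShift_apply, RCLike.inner_apply, map_mul, Complex.conj_ofReal, Pi.neg_apply,
    Equiv.coe_addRight]
  rw [mul_mul_mul_comm, ← Complex.ofReal_mul, ← Real.exp_add]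
  ring_nf
  simp

lemma adjoint_expShift (hψ : LipschitzWith L ψ) (hψφ : ψ = -φ) (d : ℤ) :
    ContinuousLinearMap.adjoint (expShift φ hφ d) = expShift ψ hψ (-d) := by
  subst hψφ
  refine ((ContinuousLinearMap.eq_adjoint_iff _ _).2 fun z x => ?_).symm
  rw [lp.inner_eq_tsum, lp.inner_eq_tsum, ← (Equiv.addRight d).tsum_eq]
  refine tsum_congr fun n => ?_
  simp only [expShift_apply, RCLike.inner_apply, map_mul, Complex.conj_ofReal, Pi.neg_apply,
    Equiv.coe_addRight, add_neg_cancel_right]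
  ring_nf

lemma frequentlyOutgrows_expShift {ρ : ℝ} (heven : φ.Even) (hosc : Oscillates φ ρ) {d : ℤ}
    (hd : d = 1 ∨ d = -1) {x : Hsp} (hx : x ≠ 0) :
    FrequentlyOutgrows (expShift φ hφ d) (Real.exp ρ) x := by
  obtain ⟨n, hn⟩ : ∃ n, x n ≠ 0 := by
    by_contra! h
    exact hx (lp.ext (funext h))
  have hxn : 0 < ‖x n‖ := norm_pos_iff.2 hn
  have hwalk : ∀ R, ∃ᶠ N : ℕ in atTop, R + N * ρ < φ (n - N * d) - φ n := by
    intro R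
    rcases hd with rfl | rfl
    · refine (hosc 0 (-n) R).mono fun N hN => ?_
      rw [← heven (n - N * 1), ← heven n, show -(n - N * 1) = -n + N by ring]
      simpa using hN
    · simpa using hosc 0 n R
  intro M
  refine (hwalk (M / ‖x n‖)).mono fun N hN => ?_
  have hcoord := exp_mul_norm_le_norm_expShift hφ (N * d) x (n - N * d)
  rw [sub_add_cancel, ← expShift_pow] at hcoord
  have hM : M < Real.exp (M / ‖x n‖) * ‖x n‖ := by
    rw [← div_lt_iff₀ hxn]
    linarith [Real.add_one_le_exp (M / ‖x n‖)]
  calc M * Real.exp ρ ^ N < Real.exp (M / ‖x n‖) * ‖x n‖ * Real.exp ρ ^ N := by gcongr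
    _ = Real.exp (M / ‖x n‖ + N * ρ) * ‖x n‖ := by rw [Real.exp_add, Real.exp_nat_mul]; ring
    _ < Real.exp (φ (n - N * d) - φ n) * ‖x n‖ := by gcongr
    _ ≤ ‖(expShift φ hφ d ^ N) x‖ := hcoord

end WeightedShift

section L2Prod

variable {𝕜 E F : Type*} [RCLike 𝕜]

section Normed

variable [NormedAddCommGroup E] [NormedAddCommGroup F] [NormedSpace 𝕜 E] [NormedSpace 𝕜 F]

def l2ProdMap (P : E →L[𝕜] E) (Q : F →L[𝕜] F) : WithLp 2 (E × F) →L[𝕜] WithLp 2 (E × F) :=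
  (WithLp.prodContinuousLinearEquiv 2 𝕜 E F).symm.toContinuousLinearMap ∘L
    P.prodMap Q ∘L (WithLp.prodContinuousLinearEquiv 2 𝕜 E F).toContinuousLinearMap

@[simp] lemma l2ProdMap_fst (P : E →L[𝕜] E) (Q : F →L[𝕜] F) (u : WithLp 2 (E × F)) :
    (l2ProdMap P Q u).fst = P u.fst := rfl

@[simp] lemma l2ProdMap_snd (P : E →L[𝕜] E) (Q : F →L[𝕜] F) (u : WithLp 2 (E × F)) :
    (l2ProdMap P Q u).snd = Q u.snd := rfl

lemma l2ProdMap_comp (P P' : E →L[𝕜] E) (Q Q' : F →L[𝕜] F) :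
    l2ProdMap P Q ∘L l2ProdMap P' Q' = l2ProdMap (P ∘L P') (Q ∘L Q') := rfl

lemma l2ProdMap_one : l2ProdMap (1 : E →L[𝕜] E) (1 : F →L[𝕜] F) = 1 := rfl

lemma l2ProdMap_pow (P : E →L[𝕜] E) (Q : F →L[𝕜] F) (N : ℕ) :
    l2ProdMap P Q ^ N = l2ProdMap (P ^ N) (Q ^ N) := by
  induction N with
  | zero => exact l2ProdMap_one.symm
  | succ N ih => rw [pow_succ, ih, ContinuousLinearMap.mul_def, l2ProdMap_comp]; rfl

lemma norm_l2ProdMap_le {P : E →L[𝕜] E} {Q : F →L[𝕜] F} {C : ℝ} (hP : ‖P‖ ≤ C) (hQ : ‖Q‖ ≤ C) :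
    ‖l2ProdMap P Q‖ ≤ C := by
  have hC : 0 ≤ C := (norm_nonneg _).trans hP
  refine ContinuousLinearMap.opNorm_le_bound _ hC fun u => ?_
  have h₁ : ‖P u.fst‖ ≤ C * ‖u.fst‖ := (P.le_opNorm _).trans (by gcongr)
  have h₂ : ‖Q u.snd‖ ≤ C * ‖u.snd‖ := (Q.le_opNorm _).trans (by gcongr)
  rw [← sq_le_sq₀ (norm_nonneg _) (by positivity), mul_pow, WithLp.prod_norm_sq_eq_of_L2,
    WithLp.prod_norm_sq_eq_of_L2, l2ProdMap_fst, l2ProdMap_snd, mul_add, ← mul_pow, ← mul_pow]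
  gcongr

end Normed

lemma adjoint_l2ProdMap [NormedAddCommGroup E] [NormedAddCommGroup F] [InnerProductSpace 𝕜 E]
    [InnerProductSpace 𝕜 F] [CompleteSpace E] [CompleteSpace F] (P : E →L[𝕜] E) (Q : F →L[𝕜] F) :
    ContinuousLinearMap.adjoint (l2ProdMap P Q) =
      l2ProdMap (ContinuousLinearMap.adjoint P) (ContinuousLinearMap.adjoint Q) := by
  refine ((ContinuousLinearMap.eq_adjoint_iff _ _).2 fun u v => ?_).symm
  simp only [WithLp.prod_inner_apply]
  exact congrArg₂ (· + ·) (P.adjoint_inner_left _ _) (Q.adjoint_inner_left _ _)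

lemma frequentlyOutgrows_l2ProdMap [NormedAddCommGroup E] [NormedAddCommGroup F]
    [NormedSpace ℂ E] [NormedSpace ℂ F] {P : E →L[ℂ] E} {Q : F →L[ℂ] F} {a : ℝ}
    (hP : ∀ x ≠ 0, FrequentlyOutgrows P a x) (hQ : ∀ y ≠ 0, FrequentlyOutgrows Q a y)
    {u : WithLp 2 (E × F)} (hu : u ≠ 0) : FrequentlyOutgrows (l2ProdMap P Q) a u := by
  by_cases h : u.fst = 0
  · have h' : u.snd ≠ 0 := fun h' => hu (WithLp.ofLp_injective 2 (Prod.ext h h'))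
    refine (hQ _ h').of_norm_le fun N => ?_
    simpa [l2ProdMap_pow] using WithLp.norm_snd_le (x := (l2ProdMap P Q ^ N) u)
  · refine (hP _ h).of_norm_le fun N => ?_
    simpa [l2ProdMap_pow] using WithLp.norm_fst_le (x := (l2ProdMap P Q ^ N) u)

end L2Prod

section ShiftPair

variable {φ : ℤ → ℝ} {L : ℝ≥0} (hφ : LipschitzWith L φ)

def shiftPair (φ : ℤ → ℝ) (hφ : LipschitzWith L φ) (d : ℤ) : K →L[ℂ] K :=
  l2ProdMap (expShift φ hφ d) (expShift (-φ) hφ.neg d)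

lemma shiftPair_comp (d e : ℤ) :
    shiftPair φ hφ d ∘L shiftPair φ hφ e = shiftPair φ hφ (d + e) := by
  rw [shiftPair, shiftPair, l2ProdMap_comp, expShift_comp, expShift_comp, shiftPair]

lemma shiftPair_zero : shiftPair φ hφ 0 = 1 := by
  rw [shiftPair, expShift_zero, expShift_zero, l2ProdMap_one]

lemma shiftPair_pow (d : ℤ) (N : ℕ) : shiftPair φ hφ d ^ N = shiftPair φ hφ (N * d) := by
  rw [shiftPair, l2ProdMap_pow, expShift_pow, expShift_pow, shiftPair]

lemma indef_shiftPair (d : ℤ) (p q : K) :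
    indef (shiftPair φ hφ d p) (shiftPair φ hφ d q) = indef p q := by
  simp only [indef]
  exact congrArg₂ (· + ·) (inner_expShift_expShift hφ hφ.neg rfl d _ _)
    (inner_expShift_expShift hφ.neg hφ (neg_neg φ).symm d _ _)

lemma adjoint_shiftPair (d : ℤ) :
    ContinuousLinearMap.adjoint (shiftPair φ hφ d) = shiftPair (-φ) hφ.neg (-d) := by
  rw [shiftPair, adjoint_l2ProdMap, adjoint_expShift hφ hφ.neg rfl,
    adjoint_expShift hφ.neg hφ.neg.neg rfl, shiftPair]

lemma norm_shiftPair_le {d : ℤ} {B : ℝ} (hB : ∀ n, |φ n - φ (n + d)| ≤ B) :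
    ‖shiftPair φ hφ d‖ ≤ Real.exp B :=
  norm_l2ProdMap_le (norm_expShift_le hφ fun n => (le_abs_self _).trans (hB n))
    (norm_expShift_le hφ.neg fun n => by
      rw [Pi.neg_apply, Pi.neg_apply, neg_sub_neg]
      exact (le_abs_self _).trans ((abs_sub_comm _ _).trans_le (hB n)))

variable {ρ : ℝ}

lemma frequentlyOutgrows_shiftPair (heven : φ.Even) (hosc : Oscillates φ ρ) {d : ℤ}
    (hd : d = 1 ∨ d = -1) {u : K} (hu : u ≠ 0) :
    FrequentlyOutgrows (shiftPair φ hφ d) (Real.exp ρ) u :=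
  frequentlyOutgrows_l2ProdMap (fun _ hx => frequentlyOutgrows_expShift hφ heven hosc hd hx)
    (fun _ hx => frequentlyOutgrows_expShift hφ.neg heven.neg hosc.neg hd hx) hu

lemma S_shiftPair (heven : φ.Even) (hosc : Oscillates φ ρ) {d : ℤ} (hd : d = 1 ∨ d = -1) :
    S (shiftPair φ hφ d) (Real.exp ρ) = {0} :=
  S_eq_zero_of_frequentlyOutgrows fun _ => frequentlyOutgrows_shiftPair hφ heven hosc hd

lemma spectralRadius_shiftPair
    (hwin : ∀ μ > ρ, ∃ C, ∀ m n : ℤ, |φ m - φ n| ≤ μ * |(m : ℝ) - n| + C)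
    (heven : φ.Even) (hosc : Oscillates φ ρ) {d : ℤ} (hd : d = 1 ∨ d = -1) :
    spectralRadius ℂ (shiftPair φ hφ d) = ENNReal.ofReal (Real.exp ρ) := by
  refine le_antisymm
    (spectralRadius_le_ofReal_of_norm_pow_le (Real.exp_pos ρ).le fun b hb => ?_) ?_
  · have hb0 : 0 < b := (Real.exp_pos ρ).trans hb
    obtain ⟨C, hC⟩ := hwin (Real.log b) ((Real.lt_log_iff_exp_lt hb0).2 hb)
    refine ⟨Real.exp C, fun N => ?_⟩
    have hlag : ∀ n : ℤ, |(n : ℝ) - ((n + N * d : ℤ) : ℝ)| = N := fun n => by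
      rcases hd with rfl | rfl <;> simp
    rw [shiftPair_pow]
    refine (norm_shiftPair_le hφ (B := Real.log b * N + C) fun n => ?_).trans_eq ?_
    · simpa only [hlag] using hC n (n + N * d)
    · rw [Real.exp_add, mul_comm (Real.log b), Real.exp_nat_mul, Real.exp_log hb0, mul_comm]
  · obtain ⟨u, hu⟩ : ∃ u : K, u ≠ 0 :=
      ⟨WithLp.toLp 2 (lp.single 2 0 1, 0), fun h => by
        simpa using congrArg (fun u : K => u.fst 0) h⟩
    exact ofReal_le_spectralRadius_of_frequentlyOutgrows (Real.exp_pos ρ).le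
      (frequentlyOutgrows_shiftPair hφ heven hosc hd hu)

end ShiftPair

/-- For every `c ≥ 1` there is a bounded invertible operator `W` with bounded inverse
on the product Hilbert space `K = H × H` such that: (i) `W` preserves the indefinite
inner product (`W` is `J`-unitary); (ii) `r(W) = r(W⁻¹) = c`; and (iii)
`S(W,c) = S(W⁻¹,c) = S((W*)⁻¹,c) = S(W*,c) = {0}` (here `(W*)⁻¹ = (W⁻¹)*`). -/
theorem stmt18 (c : ℝ) (hc : 1 ≤ c) :
    ∃ W Winv : K →L[ℂ] K,
      W ∘L Winv = 1 ∧ Winv ∘L W = 1 ∧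
      (∀ p q : K, indef (W p) (W q) = indef p q) ∧
      spectralRadius ℂ W = ENNReal.ofReal c ∧
      spectralRadius ℂ Winv = ENNReal.ofReal c ∧
      S W c = {0} ∧ S Winv c = {0} ∧
      S (ContinuousLinearMap.adjoint Winv) c = {0} ∧
      S (ContinuousLinearMap.adjoint W) c = {0} := by
  obtain ⟨ρ, hρ, rfl⟩ : ∃ ρ, 0 ≤ ρ ∧ Real.exp ρ = c :=
    ⟨Real.log c, Real.log_nonneg hc, Real.exp_log (by linarith)⟩
  have hφ := Oscillating.lipschitzWith_phi ρ
  have heven : (Oscillating.phi ρ).Even := Oscillating.even_phi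
  have hosc := Oscillating.oscillates_phi hρ
  have hwin : ∀ μ > ρ, _ := fun _ => Oscillating.exists_abs_phi_sub_le hρ
  have hd₁ : (1 : ℤ) = 1 ∨ (1 : ℤ) = -1 := Or.inl rfl
  have hd₂ : (-1 : ℤ) = 1 ∨ (-1 : ℤ) = -1 := Or.inr rfl
  refine ⟨shiftPair _ hφ (-1), shiftPair _ hφ 1, ?_, ?_, indef_shiftPair hφ (-1),
    spectralRadius_shiftPair hφ hwin heven hosc hd₂,
    spectralRadius_shiftPair hφ hwin heven hosc hd₁,
    S_shiftPair hφ heven hosc hd₂, S_shiftPair hφ heven hosc hd₁, ?_, ?_⟩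
  · rw [shiftPair_comp, neg_add_cancel, shiftPair_zero]
  · rw [shiftPair_comp, add_neg_cancel, shiftPair_zero]
  · rw [adjoint_shiftPair]
    exact S_shiftPair hφ.neg heven.neg hosc.neg hd₂
  · rw [adjoint_shiftPair]
    exact S_shiftPair hφ.neg heven.neg hosc.neg hd₁
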